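/- arXiv:2202.04245 — 2 statements merged into one kernel-verified Lean document; each statement's English description precedes it below -/
import Mathlib

section
/- Let F be 0-strongly regular on [0,U) with c = 0. Let q_l*(γ), q_u*(γ) = γ q_l*(γ) be the optimal prices under the γ-ratio constraint (first-order condition γS(γ q_l*) = q_l* f(q_l*)). Then for all γ ≥ 1, q_u*(γ) ≥ q_u*(1), where q_u*(1) is the uniform monopoly price solving S(p) = p f(p); and consequently S(q_u*(γ)) - q_u*(γ) f(q_u*(γ)) ≤ 0, hence q_l*(γ) is non-increasing in γ. -/
open Set Filter

/-!
At `γ = 1` the first-order condition says that `q_l*(1)` is the uniform monopoly price: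
`S(p) = p f(p)`. Whenever `q_u*(γ) = γ q_l*(γ)` comes back to that level, the numerator of the
derivative formula vanishes, so `d q_u*/dγ = q_l*(γ) > 0` there; hence `q_u*` can never cross
below `q_u*(1)`. Since the virtual value `w(v) = v - S(v)/f(v)` is increasing and vanishes at
the monopoly price, `w(q_u*(γ)) ≥ 0`, i.e. `S(q_u*) - q_u* f(q_u*) ≤ 0`, which makes the
derivative of `q_l*` nonpositive.
-/

theorem const_le_of_hasDerivAt_pos_of_eq {g g' : ℝ → ℝ} {a c : ℝ}
    (hg : ∀ x ∈ Ici a, HasDerivAt g (g' x) x) (ha : c ≤ g a)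
    (hlevel : ∀ x ∈ Ici a, g x = c → 0 < g' x) : ∀ x ∈ Ici a, c ≤ g x := by
  intro b hb
  have hfence := image_le_of_deriv_right_lt_deriv_boundary (a := a) (b := b) (f := fun x => -g x)
    (f' := fun x => -g' x) (B := fun _ => -c) (B' := fun _ => 0)
    (fun x hx => (hg x hx.1).continuousAt.neg.continuousWithinAt)
    (fun x hx => (hg x hx.1).neg.hasDerivWithinAt) (neg_le_neg ha)
    (fun _ => hasDerivAt_const _ _)
    (fun x hx hx_eq => neg_neg_of_pos (hlevel x hx.1 (neg_inj.1 hx_eq)))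
  exact neg_le_neg_iff.1 (hfence ⟨hb, le_rfl⟩)

theorem antitoneOn_Ici_of_hasDerivAt_nonpos {g g' : ℝ → ℝ} {a : ℝ}
    (hg : ∀ x ∈ Ici a, HasDerivAt g (g' x) x) (hg' : ∀ x ∈ Ici a, g' x ≤ 0) :
    AntitoneOn g (Ici a) :=
  antitoneOn_of_hasDerivWithinAt_nonpos (convex_Ici a)
    (fun x hx => (hg x hx).continuousAt.continuousWithinAt)
    (fun x hx => (hg x (interior_subset hx)).hasDerivWithinAt)
    (fun x hx => hg' x (interior_subset hx))

noncomputable def virtualValue (S f : ℝ → ℝ) (v : ℝ) : ℝ := v - S v / f v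

theorem sub_mul_eq_neg_mul_virtualValue {S f : ℝ → ℝ} {v : ℝ} (hf : f v ≠ 0) :
    S v - v * f v = -(f v * virtualValue S f v) := by
  unfold virtualValue
  field_simp
  ring

theorem virtualValue_eq_zero_of_eq {S f : ℝ → ℝ} {v : ℝ} (hf : f v ≠ 0) (h : S v = v * f v) :
    virtualValue S f v = 0 := by
  have := sub_mul_eq_neg_mul_virtualValue (S := S) hf
  rw [h, sub_self, zero_eq_neg] at this
  exact (mul_eq_zero.1 this).resolve_left hf

theorem sub_mul_nonpos_of_virtualValue_nonneg {S f : ℝ → ℝ} {v : ℝ} (hf : 0 < f v)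
    (h : 0 ≤ virtualValue S f v) : S v - v * f v ≤ 0 := by
  rw [sub_mul_eq_neg_mul_virtualValue hf.ne', neg_nonpos]
  exact mul_nonneg hf.le h

theorem gamma_ratio_upper_geq_uniform_general
    (U : ℝ)
    (f f' S : ℝ → ℝ)
    (hfpos : ∀ v ∈ Ico 0 U, 0 < f v)
    (hw : StrictMonoOn (fun v => v - S v / f v) (Ico 0 U))
    (ql : ℝ → ℝ)
    (hrange : ∀ γ ∈ Ici (1 : ℝ), 0 < ql γ ∧ γ * ql γ < U)
    (hFOC : ∀ γ ∈ Ici (1 : ℝ), γ * S (γ * ql γ) = ql γ * f (ql γ))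
    (hdenom : ∀ γ ∈ Ici (1 : ℝ),
      0 < γ ^ 2 * f (γ * ql γ) + f (ql γ) + ql γ * f' (ql γ))
    (hderiv : ∀ γ ∈ Ici (1 : ℝ), HasDerivAt ql
      ((S (γ * ql γ) - γ * ql γ * f (γ * ql γ)) /
        (γ ^ 2 * f (γ * ql γ) + f (ql γ) + ql γ * f' (ql γ))) γ) :
    (∀ γ ∈ Ici (1 : ℝ), 1 * ql 1 ≤ γ * ql γ) ∧
    (∀ γ ∈ Ici (1 : ℝ), S (γ * ql γ) - γ * ql γ * f (γ * ql γ) ≤ 0) ∧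
    AntitoneOn ql (Ici 1) := by
  have hmem : ∀ γ ∈ Ici (1 : ℝ), γ * ql γ ∈ Ico 0 U := fun γ hγ =>
    ⟨(mul_pos (zero_lt_one.trans_le hγ) (hrange γ hγ).1).le, (hrange γ hγ).2⟩
  have hmem_one : ql 1 ∈ Ico 0 U := by simpa using hmem 1 self_mem_Ici
  have hmonopoly : S (ql 1) = ql 1 * f (ql 1) := by
    simpa using hFOC 1 self_mem_Ici
  have hupper : ∀ γ ∈ Ici (1 : ℝ), 1 * ql 1 ≤ γ * ql γ := by
    refine const_le_of_hasDerivAt_pos_of_eq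
      (fun γ hγ => (hasDerivAt_id γ).mul (hderiv γ hγ)) le_rfl fun γ hγ hlevel => ?_
    simpa [hlevel, hmonopoly, sub_self] using (hrange γ hγ).1
  have hmarginal : ∀ γ ∈ Ici (1 : ℝ), S (γ * ql γ) - γ * ql γ * f (γ * ql γ) ≤ 0 := by
    intro γ hγ
    have hw_monopoly : virtualValue S f (ql 1) = 0 :=
      virtualValue_eq_zero_of_eq (hfpos _ hmem_one).ne' hmonopoly
    refine sub_mul_nonpos_of_virtualValue_nonneg (hfpos _ (hmem γ hγ)) ?_
    rw [← hw_monopoly]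
    exact hw.monotoneOn hmem_one (hmem γ hγ) (by simpa using hupper γ hγ)
  refine ⟨hupper, hmarginal, antitoneOn_Ici_of_hasDerivAt_nonpos hderiv fun γ hγ => ?_⟩
  exact div_nonpos_of_nonpos_of_nonneg (hmarginal γ hγ) (hdenom γ hγ).le

/-- Let `F` be 0-strongly regular on `[0, U)` with `c = 0`. Let `q_l*(γ)`
and `q_u*(γ) = γ·q_l*(γ)` be the optimal prices under the `γ`-ratio
constraint (first-order condition `γ·S(γ q_l*) = q_l*·f(q_l*)`), with the
derivative formula `dq_l*/dγ = (S(q_u*) - q_u* f(q_u*)) / D(γ)` where the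
denominator `D(γ) = γ²f(γ q_l*) + f(q_l*) + q_l* f'(q_l*)` is positive. Then
for all `γ ≥ 1`, `q_u*(γ) ≥ q_u*(1)` (the uniform monopoly price, solving
`S(p) = p·f(p)`), consequently `S(q_u*(γ)) - q_u*(γ)·f(q_u*(γ)) ≤ 0`, and
hence `q_l*` is non-increasing on `[1, ∞)`. -/
theorem gamma_ratio_upper_geq_uniform
    (U : ℝ) (hU : 0 < U)
    (f f' S : ℝ → ℝ)
    (hSderiv : ∀ v ∈ Ico 0 U, HasDerivAt S (-(f v)) v)
    (hfderiv : ∀ v ∈ Ico 0 U, HasDerivAt f (f' v) v)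
    (hfpos : ∀ v ∈ Ico 0 U, 0 < f v)
    (hSpos : ∀ v ∈ Ico 0 U, 0 < S v)
    (hw : StrictMonoOn (fun v => v - S v / f v) (Ico 0 U))
    (hlim : ∃ L, 0 < L ∧
      Tendsto (fun v => v - S v / f v) (nhdsWithin U (Iio U)) (nhds L))
    (ql : ℝ → ℝ)
    (hrange : ∀ γ ∈ Ici (1 : ℝ), 0 < ql γ ∧ γ * ql γ < U)
    (hFOC : ∀ γ ∈ Ici (1 : ℝ), γ * S (γ * ql γ) = ql γ * f (ql γ))
    (hdenom : ∀ γ ∈ Ici (1 : ℝ),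
      0 < γ ^ 2 * f (γ * ql γ) + f (ql γ) + ql γ * f' (ql γ))
    (hderiv : ∀ γ ∈ Ici (1 : ℝ), HasDerivAt ql
      ((S (γ * ql γ) - γ * ql γ * f (γ * ql γ)) /
        (γ ^ 2 * f (γ * ql γ) + f (ql γ) + ql γ * f' (ql γ))) γ) :
    (∀ γ ∈ Ici (1 : ℝ), 1 * ql 1 ≤ γ * ql γ) ∧
    (∀ γ ∈ Ici (1 : ℝ), S (γ * ql γ) - γ * ql γ * f (γ * ql γ) ≤ 0) ∧
    AntitoneOn ql (Ici 1) :=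
  gamma_ratio_upper_geq_uniform_general U f f' S hfpos hw ql hrange hFOC hdenom hderiv
end

section
/- Let F be 0-strongly regular on [0,U) with c = 0, and let q_l*(γ) be the optimal lower price under the γ-ratio constraint. Given that q_l*(γ) ≤ q_l*(1) (where q_l*(1) is the uniform monopoly price with w(q_l*(1)) = 0), one has (q_l*)² f'(q_l*) + 2 q_l* f(q_l*) ≥ (2 q_l* f²(q_l*)/S(q_l*))·(S(q_l*)/f(q_l*) − q_l*) ≥ 0, and hence the optimal upper price q_u*(γ) is non-decreasing in γ. -/
/-!
Strong regularity `2 f² + S f' ≥ 0` makes `q ↦ q² f'(q) + 2 q f(q)` exceed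
`(2 q f²/S)(S/f − q)` by `q² (2 f² + S f')/S ≥ 0`. Since `q_l*(γ) ≤ q_l*(1)` and the virtual
value `w = v − S/f` is increasing and vanishes at `q_l*(1)`, we have `w(q_l*(γ)) ≤ 0`, so this
lower bound is nonnegative. Hence the numerator of `d q_u*/dγ` is nonnegative, its denominator is
positive, and `q_u* = γ q_l*` is monotone by the mean value theorem.
-/

open Set

lemma monotoneOn_of_hasDerivAt_nonneg {D : Set ℝ} (hD : Convex ℝ D) {g g' : ℝ → ℝ}
    (hg : ∀ x ∈ D, HasDerivAt g (g' x) x) (hg' : ∀ x ∈ D, 0 ≤ g' x) : MonotoneOn g D :=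
  monotoneOn_of_hasDerivWithinAt_nonneg hD
    (fun x hx ↦ (hg x hx).continuousAt.continuousWithinAt)
    (fun x hx ↦ (hg x (interior_subset hx)).hasDerivWithinAt)
    (fun x hx ↦ hg' x (interior_subset hx))

lemma two_mul_mul_sq_div_mul_sub_le {q f f' S : ℝ} (hf : f ≠ 0) (hS : 0 < S)
    (hreg : 0 ≤ 2 * f ^ 2 + S * f') :
    2 * q * f ^ 2 / S * (S / f - q) ≤ q ^ 2 * f' + 2 * q * f := by
  have hgap : q ^ 2 * f' + 2 * q * f - 2 * q * f ^ 2 / S * (S / f - q) =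
      q ^ 2 * (2 * f ^ 2 + S * f') / S := by
    field_simp
    ring
  have : 0 ≤ q ^ 2 * (2 * f ^ 2 + S * f') / S := by positivity
  linarith

lemma two_mul_mul_sq_div_mul_sub_nonneg {q f S : ℝ} (hq : 0 ≤ q) (hS : 0 < S)
    (hw : q - S / f ≤ 0) : 0 ≤ 2 * q * f ^ 2 / S * (S / f - q) :=
  mul_nonneg (by positivity) (by linarith)

lemma sub_div_nonpos_of_le {s : Set ℝ} {f S : ℝ → ℝ}
    (hw : MonotoneOn (fun v ↦ v - S v / f v) s) {q m : ℝ} (hq : q ∈ s) (hm : m ∈ s)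
    (hqm : q ≤ m) (hf : f m ≠ 0) (hwm : S m = m * f m) : q - S q / f q ≤ 0 := by
  have hw0 : m - S m / f m = 0 := by rw [hwm, mul_div_cancel_right₀ _ hf, sub_self]
  exact (hw hq hm hqm).trans hw0.le

theorem gamma_ratio_upper_price_monotone_general
    (U : ℝ)
    (f f' S : ℝ → ℝ)
    (hfpos : ∀ v ∈ Ico 0 U, 0 < f v)
    (hSpos : ∀ v ∈ Ico 0 U, 0 < S v)
    (hw : StrictMonoOn (fun v => v - S v / f v) (Ico 0 U))
    (hwder : ∀ v ∈ Ico 0 U, 0 ≤ 2 * (f v) ^ 2 + S v * f' v)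
    (ql : ℝ → ℝ)
    (hrange : ∀ γ ∈ Ici (1 : ℝ), 0 < ql γ ∧ γ * ql γ < U)
    (huniform : S (ql 1) = ql 1 * f (ql 1))
    (hle : ∀ γ ∈ Ici (1 : ℝ), ql γ ≤ ql 1)
    (hdenom : ∀ γ ∈ Ici (1 : ℝ),
      0 < γ ^ 2 * f (γ * ql γ) + f (ql γ) + ql γ * f' (ql γ))
    (hderiv : ∀ γ ∈ Ici (1 : ℝ), HasDerivAt (fun t => t * ql t)
      (((ql γ) ^ 2 * f' (ql γ) + 2 * ql γ * f (ql γ)) /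
        (γ ^ 2 * f (γ * ql γ) + f (ql γ) + ql γ * f' (ql γ))) γ) :
    (∀ γ ∈ Ici (1 : ℝ),
      (ql γ) ^ 2 * f' (ql γ) + 2 * ql γ * f (ql γ) ≥
        2 * ql γ * (f (ql γ)) ^ 2 / S (ql γ) *
          (S (ql γ) / f (ql γ) - ql γ) ∧
      0 ≤ 2 * ql γ * (f (ql γ)) ^ 2 / S (ql γ) *
          (S (ql γ) / f (ql γ) - ql γ)) ∧
    MonotoneOn (fun γ => γ * ql γ) (Ici 1) := by
  have hmem : ∀ γ ∈ Ici (1 : ℝ), ql γ ∈ Ico 0 U := fun γ hγ ↦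
    have ⟨hq, hqU⟩ := hrange γ hγ
    ⟨hq.le, (le_mul_of_one_le_left hq.le hγ).trans_lt hqU⟩
  have hmem1 : ql 1 ∈ Ico 0 U := hmem 1 self_mem_Ici
  have hbounds : ∀ γ ∈ Ici (1 : ℝ),
      2 * ql γ * (f (ql γ)) ^ 2 / S (ql γ) * (S (ql γ) / f (ql γ) - ql γ) ≤
          (ql γ) ^ 2 * f' (ql γ) + 2 * ql γ * f (ql γ) ∧
        0 ≤ 2 * ql γ * (f (ql γ)) ^ 2 / S (ql γ) * (S (ql γ) / f (ql γ) - ql γ) := by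
    intro γ hγ
    have hq := hmem γ hγ
    have hw_nonpos : ql γ - S (ql γ) / f (ql γ) ≤ 0 :=
      sub_div_nonpos_of_le hw.monotoneOn hq hmem1 (hle γ hγ) (hfpos _ hmem1).ne' huniform
    exact ⟨two_mul_mul_sq_div_mul_sub_le (hfpos _ hq).ne' (hSpos _ hq) (hwder _ hq),
      two_mul_mul_sq_div_mul_sub_nonneg (hrange γ hγ).1.le (hSpos _ hq) hw_nonpos⟩
  refine ⟨hbounds, monotoneOn_of_hasDerivAt_nonneg (convex_Ici 1) hderiv fun γ hγ ↦ ?_⟩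
  obtain ⟨hlower, hlower_nonneg⟩ := hbounds γ hγ
  exact div_nonneg (hlower_nonneg.trans hlower) (hdenom γ hγ).le

/-- Let `F` be 0-strongly regular on `[0, U)` with `c = 0`, and `q_l*(γ)`
the optimal lower price under the `γ`-ratio constraint. Given that
`q_l*(γ) ≤ q_l*(1)` where `q_l*(1)` is the uniform monopoly price (with
`w(q_l*(1)) = 0`, i.e. `S(q_l*(1)) = q_l*(1)·f(q_l*(1))`), one has
`(q_l*)²·f'(q_l*) + 2 q_l*·f(q_l*)
   ≥ (2 q_l*·f(q_l*)²/S(q_l*))·(S(q_l*)/f(q_l*) − q_l*) ≥ 0`,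
and hence (via the derivative formula for `q_u*(γ) = γ·q_l*(γ)`, whose
denominator is positive) the optimal upper price `q_u*` is non-decreasing
on `[1, ∞)`. -/
theorem gamma_ratio_upper_price_monotone
    (U : ℝ) (hU : 0 < U)
    (f f' S : ℝ → ℝ)
    (hfderiv : ∀ v ∈ Ico 0 U, HasDerivAt f (f' v) v)
    (hfpos : ∀ v ∈ Ico 0 U, 0 < f v)
    (hSpos : ∀ v ∈ Ico 0 U, 0 < S v)
    (hw : StrictMonoOn (fun v => v - S v / f v) (Ico 0 U))
    (hwder : ∀ v ∈ Ico 0 U, 0 ≤ 2 * (f v) ^ 2 + S v * f' v)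
    (ql : ℝ → ℝ)
    (hrange : ∀ γ ∈ Ici (1 : ℝ), 0 < ql γ ∧ γ * ql γ < U)
    (huniform : S (ql 1) = ql 1 * f (ql 1))
    (hle : ∀ γ ∈ Ici (1 : ℝ), ql γ ≤ ql 1)
    (hdenom : ∀ γ ∈ Ici (1 : ℝ),
      0 < γ ^ 2 * f (γ * ql γ) + f (ql γ) + ql γ * f' (ql γ))
    (hderiv : ∀ γ ∈ Ici (1 : ℝ), HasDerivAt (fun t => t * ql t)
      (((ql γ) ^ 2 * f' (ql γ) + 2 * ql γ * f (ql γ)) /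
        (γ ^ 2 * f (γ * ql γ) + f (ql γ) + ql γ * f' (ql γ))) γ) :
    (∀ γ ∈ Ici (1 : ℝ),
      (ql γ) ^ 2 * f' (ql γ) + 2 * ql γ * f (ql γ) ≥
        2 * ql γ * (f (ql γ)) ^ 2 / S (ql γ) *
          (S (ql γ) / f (ql γ) - ql γ) ∧
      0 ≤ 2 * ql γ * (f (ql γ)) ^ 2 / S (ql γ) *
          (S (ql γ) / f (ql γ) - ql γ)) ∧
    MonotoneOn (fun γ => γ * ql γ) (Ici 1) :=
  gamma_ratio_upper_price_monotone_general U f f' S hfpos hSpos hw hwder ql hrange huniform hle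
    hdenom hderiv
end
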